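/- For ε > 0, the ⵟ-product kernel kⵟ(x,w) = ⟨x,w⟩²/(‖x-w‖² + ε) is positive semidefinite on R^d: for any points x₁,...,xₙ and real coefficients c₁,...,cₙ, Σᵢⱼ cᵢcⱼ·kⵟ(xᵢ,xⱼ) ≥ 0. -/

import Mathlib

noncomputable def yat {d : ℕ} (ε : ℝ) (x w : EuclideanSpace ℝ (Fin d)) : ℝ :=
  (inner ℝ x w : ℝ) ^ 2 / (‖x - w‖ ^ 2 + ε)

open MeasureTheory Finset Real Set

/-- Schur powers of a Gram matrix give a PSD kernel. -/
lemma inner_pow_psd {d n : ℕ} (k : ℕ) (x : Fin n → EuclideanSpace ℝ (Fin d))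
    (f : Fin n → ℝ) :
    0 ≤ ∑ i, ∑ j, f i * f j * (inner ℝ (x i) (x j) : ℝ) ^ k := by
  set P := Fintype.piFinset (fun _ : Fin k => (univ : Finset (Fin d))) with hP
  have hinner : ∀ i j, (inner ℝ (x i) (x j) : ℝ) = ∑ a, x i a * x j a := by
    intro i j
    simp [PiLp.inner_apply, RCLike.inner_apply, mul_comm]
  have h1 : ∀ i j, (inner ℝ (x i) (x j) : ℝ) ^ k =
      ∑ p ∈ P, (∏ l, x i (p l)) * (∏ l, x j (p l)) := by
    intro i j
    rw [hinner, Finset.sum_pow']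
    exact Finset.sum_congr rfl fun p _ => by rw [Finset.prod_mul_distrib]
  have h2 : ∀ p : Fin k → Fin d, (∑ i, f i * ∏ l, x i (p l)) ^ 2 =
      ∑ i, ∑ j, f i * f j * ((∏ l, x i (p l)) * (∏ l, x j (p l))) := by
    intro p
    rw [sq, Finset.sum_mul_sum]
    exact Finset.sum_congr rfl fun i _ => Finset.sum_congr rfl fun j _ => by ring
  calc (0:ℝ) ≤ ∑ p ∈ P, (∑ i, f i * ∏ l, x i (p l)) ^ 2 :=
        Finset.sum_nonneg fun p _ => sq_nonneg _
    _ = ∑ p ∈ P, ∑ i, ∑ j, f i * f j * ((∏ l, x i (p l)) * (∏ l, x j (p l))) :=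
        Finset.sum_congr rfl fun p _ => h2 p
    _ = ∑ i, ∑ p ∈ P, ∑ j, f i * f j * ((∏ l, x i (p l)) * (∏ l, x j (p l))) :=
        Finset.sum_comm
    _ = ∑ i, ∑ j, ∑ p ∈ P, f i * f j * ((∏ l, x i (p l)) * (∏ l, x j (p l))) :=
        Finset.sum_congr rfl fun i _ => Finset.sum_comm
    _ = ∑ i, ∑ j, f i * f j * (inner ℝ (x i) (x j) : ℝ) ^ k := by
        refine Finset.sum_congr rfl fun i _ => Finset.sum_congr rfl fun j _ => ?_
        rw [h1, Finset.mul_sum]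

/-- ⟨x,w⟩² · exp(t·⟨x,w⟩) is a PSD kernel for t ≥ 0. -/
lemma inner_sq_exp_psd {d n : ℕ} (t : ℝ) (ht : 0 ≤ t)
    (x : Fin n → EuclideanSpace ℝ (Fin d)) (f : Fin n → ℝ) :
    0 ≤ ∑ i, ∑ j, f i * f j * (inner ℝ (x i) (x j) : ℝ) ^ 2 *
      Real.exp (t * (inner ℝ (x i) (x j) : ℝ)) := by
  have hexp : ∀ y : ℝ, Real.exp y = ∑' m : ℕ, y ^ m / m.factorial := by
    intro y
    rw [Real.exp_eq_exp_ℝ, NormedSpace.exp_eq_tsum_div]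
  set s : Fin n → Fin n → ℝ := fun i j => (inner ℝ (x i) (x j) : ℝ) with hs
  have hterm : ∀ i j, f i * f j * s i j ^ 2 * Real.exp (t * s i j) =
      ∑' m : ℕ, (t ^ m / m.factorial) * (f i * f j * s i j ^ (m + 2)) := by
    intro i j
    rw [hexp, ← tsum_mul_left]
    congr 1
    funext m
    rw [mul_pow, pow_add]
    ring
  have hsum : ∀ i j, Summable (fun m : ℕ =>
      (t ^ m / m.factorial) * (f i * f j * s i j ^ (m + 2))) := by
    intro i j
    have : (fun m : ℕ => (t ^ m / m.factorial) * (f i * f j * s i j ^ (m + 2))) =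
        fun m : ℕ => (f i * f j * s i j ^ 2) * ((t * s i j) ^ m / m.factorial) := by
      funext m
      rw [mul_pow, pow_add]
      ring
    rw [this]
    exact (Real.summable_pow_div_factorial (t * s i j)).mul_left _
  calc ∑ i, ∑ j, f i * f j * s i j ^ 2 * Real.exp (t * s i j)
      = ∑ i, ∑ j, ∑' m : ℕ, (t ^ m / m.factorial) * (f i * f j * s i j ^ (m + 2)) := by
        exact Finset.sum_congr rfl fun i _ => Finset.sum_congr rfl fun j _ => hterm i j
    _ = ∑' m : ℕ, ∑ i, ∑ j, (t ^ m / m.factorial) * (f i * f j * s i j ^ (m + 2)) := by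
        rw [Summable.tsum_finsetSum (fun i _ => summable_sum (fun j _ => hsum i j))]
        exact Finset.sum_congr rfl fun i _ => (Summable.tsum_finsetSum (fun j _ => hsum i j)).symm
    _ ≥ 0 := by
        apply tsum_nonneg
        intro m
        have h1 : 0 ≤ ∑ i, ∑ j, f i * f j * s i j ^ (m + 2) :=
          inner_pow_psd (m + 2) x f
        have h2 : (0:ℝ) ≤ t ^ m / m.factorial := by positivity
        calc (0:ℝ) ≤ (t ^ m / m.factorial) * ∑ i, ∑ j, f i * f j * s i j ^ (m + 2) :=
              mul_nonneg h2 h1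
          _ = ∑ i, ∑ j, (t ^ m / m.factorial) * (f i * f j * s i j ^ (m + 2)) := by
              rw [Finset.mul_sum]
              exact Finset.sum_congr rfl fun i _ => Finset.mul_sum _ _ _

/-- Pointwise-in-t PSD of the integrand quadratic form. -/
lemma integrand_psd {d n : ℕ} (ε t : ℝ) (hε : 0 < ε) (ht : 0 ≤ t)
    (x : Fin n → EuclideanSpace ℝ (Fin d)) (c : Fin n → ℝ) :
    0 ≤ ∑ i, ∑ j, c i * c j * (inner ℝ (x i) (x j) : ℝ) ^ 2 *
      Real.exp (-((‖x i - x j‖ ^ 2 + ε) * t)) := by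
  set f : Fin n → ℝ := fun i => c i * Real.exp (-(‖x i‖ ^ 2 * t) - ε * t / 2) with hf
  have key : ∀ i j, c i * c j * (inner ℝ (x i) (x j) : ℝ) ^ 2 *
      Real.exp (-((‖x i - x j‖ ^ 2 + ε) * t)) =
      f i * f j * (inner ℝ (x i) (x j) : ℝ) ^ 2 *
        Real.exp ((2 * t) * (inner ℝ (x i) (x j) : ℝ)) := by
    intro i j
    have hn : ‖x i - x j‖ ^ 2 = ‖x i‖ ^ 2 - 2 * (inner ℝ (x i) (x j) : ℝ) + ‖x j‖ ^ 2 :=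
      norm_sub_sq_real (x i) (x j)
    have e : Real.exp (-((‖x i‖ ^ 2 - 2 * (inner ℝ (x i) (x j) : ℝ) + ‖x j‖ ^ 2 + ε) * t)) =
        Real.exp (-(‖x i‖ ^ 2 * t) - ε * t / 2) * Real.exp (-(‖x j‖ ^ 2 * t) - ε * t / 2) *
          Real.exp ((2 * t) * (inner ℝ (x i) (x j) : ℝ)) := by
      rw [← Real.exp_add, ← Real.exp_add]
      congr 1
      ring
    simp only [hf]
    rw [hn, e]
    ring
  rw [show (∑ i, ∑ j, c i * c j * (inner ℝ (x i) (x j) : ℝ) ^ 2 *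
      Real.exp (-((‖x i - x j‖ ^ 2 + ε) * t))) =
      ∑ i, ∑ j, f i * f j * (inner ℝ (x i) (x j) : ℝ) ^ 2 *
        Real.exp ((2 * t) * (inner ℝ (x i) (x j) : ℝ)) from
    Finset.sum_congr rfl fun i _ => Finset.sum_congr rfl fun j _ => key i j]
  exact inner_sq_exp_psd (2 * t) (by linarith) x f

lemma integral_exp_neg_mul_Ioi' {b : ℝ} (hb : 0 < b) :
    ∫ t in Ioi (0:ℝ), Real.exp (-(b * t)) = 1 / b := by
  have h := integral_comp_mul_left_Ioi (fun u => Real.exp (-u)) 0 hb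
  simp only [mul_zero, neg_zero, integral_exp_neg_Ioi, Real.exp_zero, smul_eq_mul, mul_one] at h
  rw [h, one_div]

theorem yat_kernel_psd {d n : ℕ} (ε : ℝ) (hε : 0 < ε)
    (x : Fin n → EuclideanSpace ℝ (Fin d)) (c : Fin n → ℝ) :
    0 ≤ ∑ i, ∑ j, c i * c j * yat ε (x i) (x j) := by
  have hb : ∀ i j, (0:ℝ) < ‖x i - x j‖ ^ 2 + ε := by
    intro i j; positivity
  have hrep : ∀ i j, c i * c j * yat ε (x i) (x j) =
      ∫ t in Ioi (0:ℝ), c i * c j * (inner ℝ (x i) (x j) : ℝ) ^ 2 *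
        Real.exp (-((‖x i - x j‖ ^ 2 + ε) * t)) := by
    intro i j
    rw [integral_const_mul, integral_exp_neg_mul_Ioi' (hb i j)]
    unfold yat
    rw [div_eq_mul_one_div]
    ring
  have hintg : ∀ i j, IntegrableOn (fun t : ℝ =>
      c i * c j * (inner ℝ (x i) (x j) : ℝ) ^ 2 *
        Real.exp (-((‖x i - x j‖ ^ 2 + ε) * t))) (Ioi (0:ℝ)) := by
    intro i j
    have h := (exp_neg_integrableOn_Ioi 0 (hb i j)).const_mul
      (c i * c j * (inner ℝ (x i) (x j) : ℝ) ^ 2)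
    refine h.congr (Filter.Eventually.of_forall fun t => ?_)
    simp only [neg_mul]
  calc (0:ℝ)
      ≤ ∫ t in Ioi (0:ℝ), ∑ i, ∑ j, c i * c j * (inner ℝ (x i) (x j) : ℝ) ^ 2 *
          Real.exp (-((‖x i - x j‖ ^ 2 + ε) * t)) := by
        apply setIntegral_nonneg measurableSet_Ioi
        intro t ht
        exact integrand_psd ε t hε (le_of_lt ht) x c
    _ = ∑ i, ∑ j, c i * c j * yat ε (x i) (x j) := by
        rw [integral_finset_sum _ (fun i _ => integrable_finset_sum _ (fun j _ => hintg i j))]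
        refine Finset.sum_congr rfl fun i _ => ?_
        rw [integral_finset_sum _ (fun j _ => hintg i j)]
        exact Finset.sum_congr rfl fun j _ => (hrep i j).symm
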